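/- arXiv:2306.11586 — 4 statements merged into one kernel-verified Lean document; each statement's English description precedes it below -/
import Mathlib

section
/- Under the BFS node-ID assignment process on a connected directed multigraph with consistent multigraph port numbering, the assigned node IDs are unique: no two distinct nodes receive the same ID sequence. -/
/-- In the BFS node-ID assignment process on a connected directed multigraph
with root `r` and a consistent multigraph port numbering, the root gets ID
`[1]`, and every other node adopts the lexicographically minimum proposal
`ident u ++ [label]` over all neighbors `u` one step closer to the root
(labels are the outgoing port for outgoing edges and `n +` the incoming port
for incoming edges). Then a node at undirected distance `k` from `r`
receives an ID of length exactly `k + 1`.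

The assigned node IDs are unique: no two distinct nodes receive the same
ID sequence. -/
theorem bfs_ids_unique {V : Type*} [Fintype V] [DecidableEq V]
    (E : Multiset (V × V)) (r : V) (P : V × V → ℕ × ℕ)
    (n : ℕ) (hn : n = Fintype.card V)
    (G : SimpleGraph V) (hG : G = SimpleGraph.fromRel (fun a b => (a, b) ∈ E))
    (hconn : G.Connected)
    (hrange : ∀ e ∈ E, (P e).1 ∈ Finset.Icc 1 n ∧ (P e).2 ∈ Finset.Icc 1 n)
    (hpout : ∀ u w w', (u, w) ∈ E → (u, w') ∈ E → (P (u, w)).2 = (P (u, w')).2 → w = w')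
    (hpin : ∀ u w w', (w, u) ∈ E → (w', u) ∈ E → (P (w, u)).1 = (P (w', u)).1 → w = w')
    (ident : V → List ℕ)
    (hroot : ident r = [1])
    (hstep : ∀ w, w ≠ r →
      IsLeast {l : List ℕ | ∃ u, G.dist r u + 1 = G.dist r w ∧
          (((u, w) ∈ E ∧ l = ident u ++ [(P (u, w)).2]) ∨
           ((w, u) ∈ E ∧ l = ident u ++ [n + (P (w, u)).1]))}
        (ident w)) :
    ∀ v w, ident v = ident w → v = w := by
  -- distance zero implies equal to root
  have hdist0 : ∀ v : V, G.dist r v = 0 → v = r := by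
    intro v hv
    rcases (SimpleGraph.dist_eq_zero_iff_eq_or_not_reachable).1 hv with h | h
    · exact h.symm
    · exact absurd (hconn.1 r v) h
  -- length lemma
  have hlen : ∀ k : ℕ, ∀ v : V, G.dist r v = k → (ident v).length = k + 1 := by
    intro k
    induction k using Nat.strong_induction_on with
    | _ k ih =>
      intro v hv
      by_cases hvr : v = r
      · subst hvr
        simp [SimpleGraph.dist_self] at hv
        simp [hroot, ← hv]
      · obtain ⟨u, hu, hcase⟩ := (hstep v hvr).1
        have hku : G.dist r u + 1 = k := by rw [← hv]; exact hu
        have hlt : G.dist r u < k := by omega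
        have hlu := ih _ hlt u rfl
        rcases hcase with ⟨_, hl⟩ | ⟨_, hl⟩ <;>
          simp [hl, hlu] <;> omega
  -- main uniqueness by strong induction on distance
  have main : ∀ k : ℕ, ∀ v w : V, G.dist r v = k → G.dist r w = k →
      ident v = ident w → v = w := by
    intro k
    induction k using Nat.strong_induction_on with
    | _ k ih =>
      intro v w hv hw hid
      by_cases hk : k = 0
      · subst hk
        rw [hdist0 v hv, hdist0 w hw]
      · have hvr : v ≠ r := by
          intro h; subst h; simp [SimpleGraph.dist_self] at hv; omega
        have hwr : w ≠ r := by
          intro h; subst h; simp [SimpleGraph.dist_self] at hw; omega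
        obtain ⟨u, hu, hcv⟩ := (hstep v hvr).1
        obtain ⟨u', hu', hcw⟩ := (hstep w hwr).1
        have hdu : G.dist r u = k - 1 := by rw [hv] at hu; omega
        have hdu' : G.dist r u' = k - 1 := by rw [hw] at hu'; omega
        have hlenu : (ident u).length = (k - 1) + 1 := hlen _ u hdu
        have hlenu' : (ident u').length = (k - 1) + 1 := hlen _ u' hdu'
        have hlt : k - 1 < k := by omega
        -- extract the decompositions
        have key : ∀ (a b : ℕ), ident v = ident u ++ [a] → ident w = ident u' ++ [b] →
            ident u = ident u' ∧ a = b := by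
          intro a b h1 h2
          have h3 : ident u ++ [a] = ident u' ++ [b] := by rw [← h1, ← h2, hid]
          have h4 := List.append_inj h3 (by omega)
          exact ⟨h4.1, by simpa using h4.2⟩
        rcases hcv with ⟨hev, hl1⟩ | ⟨hev, hl1⟩ <;> rcases hcw with ⟨hew, hl2⟩ | ⟨hew, hl2⟩
        · obtain ⟨huu, hab⟩ := key _ _ hl1 hl2
          have huu' : u = u' := ih _ hlt u u' hdu hdu' huu
          subst huu'
          exact hpout u v w hev hew hab
        · obtain ⟨huu, hab⟩ := key _ _ hl1 hl2
          have h1 := (hrange _ hev).2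
          have h2 := (hrange _ hew).1
          simp [Finset.mem_Icc] at h1 h2
          omega
        · obtain ⟨huu, hab⟩ := key _ _ hl1 hl2
          have h1 := (hrange _ hev).1
          have h2 := (hrange _ hew).2
          simp [Finset.mem_Icc] at h1 h2
          omega
        · obtain ⟨huu, hab⟩ := key _ _ hl1 hl2
          have huu' : u = u' := ih _ hlt u u' hdu hdu' huu
          subst huu'
          exact hpin u v w hev hew (by omega)
  intro v w hid
  have hlv := hlen _ v rfl
  have hlw := hlen _ w rfl
  have hdd : G.dist r v = G.dist r w := by rw [hid] at hlv; omega
  exact main _ v w rfl hdd.symm hid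
end

section
/- In the BFS node-ID assignment process, if all nodes at undirected distance k-1 from the root have pairwise distinct ID sequences (each of length k), then all nodes at undirected distance k receive pairwise distinct ID sequences (each of length k+1). -/
/-- Induction step of the BFS node-ID assignment process: if all nodes at
undirected distance `k - 1` from the root have pairwise distinct ID sequences,
each of length `k`, then all nodes at undirected distance `k` receive pairwise
distinct ID sequences, each of length `k + 1`. -/
theorem bfs_distinct_ids_inductive_step {V : Type*} [Fintype V] [DecidableEq V]
    (E : Multiset (V × V)) (r : V) (P : V × V → ℕ × ℕ)
    (n : ℕ) (hn : n = Fintype.card V)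
    (G : SimpleGraph V) (hG : G = SimpleGraph.fromRel (fun a b => (a, b) ∈ E))
    (hconn : G.Connected)
    (hrange : ∀ e ∈ E, (P e).1 ∈ Finset.Icc 1 n ∧ (P e).2 ∈ Finset.Icc 1 n)
    (hpout : ∀ u w w', (u, w) ∈ E → (u, w') ∈ E → (P (u, w)).2 = (P (u, w')).2 → w = w')
    (hpin : ∀ u w w', (w, u) ∈ E → (w', u) ∈ E → (P (w, u)).1 = (P (w', u)).1 → w = w')
    (ident : V → List ℕ)
    (hroot : ident r = [1])
    (hstep : ∀ w, w ≠ r →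
      IsLeast {l : List ℕ | ∃ u, G.dist r u + 1 = G.dist r w ∧
          (((u, w) ∈ E ∧ l = ident u ++ [(P (u, w)).2]) ∨
           ((w, u) ∈ E ∧ l = ident u ++ [n + (P (w, u)).1]))}
        (ident w))
    (k : ℕ) (hk : 0 < k)
    (Hdistinct : ∀ x y, G.dist r x = k - 1 → G.dist r y = k - 1 →
      ident x = ident y → x = y)
    (Hlen : ∀ x, G.dist r x = k - 1 → (ident x).length = k) :
    (∀ x, G.dist r x = k → (ident x).length = k + 1) ∧
      (∀ x y, G.dist r x = k → G.dist r y = k → ident x = ident y → x = y) := by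
  have hne : ∀ x, G.dist r x = k → x ≠ r := by
    intro x hx h
    subst h
    simp [SimpleGraph.dist_self] at hx
    omega
  constructor
  · intro x hx
    obtain ⟨u, hu, hcase⟩ := (hstep x (hne x hx)).1
    have hulen : (ident u).length = k := Hlen u (by omega)
    rcases hcase with ⟨_, hl⟩ | ⟨_, hl⟩ <;> simp [hl, hulen]
  · intro x y hx hy hxy
    obtain ⟨u, hu, hcu⟩ := (hstep x (hne x hx)).1
    obtain ⟨v, hv, hcv⟩ := (hstep y (hne y hy)).1
    have hud : G.dist r u = k - 1 := by omega
    have hvd : G.dist r v = k - 1 := by omega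
    have hulen : (ident u).length = k := Hlen u hud
    have hvlen : (ident v).length = k := Hlen v hvd
    rcases hcu with ⟨hEx, hlx⟩ | ⟨hEx, hlx⟩ <;> rcases hcv with ⟨hEy, hly⟩ | ⟨hEy, hly⟩ <;>
      rw [hlx, hly] at hxy <;>
      obtain ⟨h1, h2⟩ := List.append_inj' hxy (by simp) <;>
      have huv : u = v := Hdistinct u v hud hvd h1 <;>
      subst huv <;> simp at h2
    · exact hpout u x y hEx hEy h2
    · have := (hrange _ hEx).2
      have := (hrange _ hEy).1
      simp [Finset.mem_Icc] at *
      omega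
    · have := (hrange _ hEx).1
      have := (hrange _ hEy).2
      simp [Finset.mem_Icc] at *
      omega
    · exact hpin u x y hEx hEy h2
end

section
/- Let G be the directed graph on vertices {u,a,b,c,d,e,f} with bidirected edges between u and each of a,b,c,d,e,f, and directed 3-cycles a→b→c→a and d→e→f→d; and let G' be the directed graph on vertices {u',a',b',c',d',e',f'} with bidirected edges between u' and each of the other six vertices and the directed 6-cycle a'→b'→c'→d'→e'→f'→a'. Then G and G' are not isomorphic; in particular, u' lies on a directed 5-cycle while u does not lie on any directed 5-cycle. -/
/-- Edges of the counterexample graph `G`: vertex `0` (= `u`) is bidirectionally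
connected to `1, ..., 6` (= `a, ..., f`), plus two directed 3-cycles
`1→2→3→1` and `4→5→6→4`. -/
def egoEdgesG : Finset (Fin 7 × Fin 7) :=
  {(0,1),(1,0),(0,2),(2,0),(0,3),(3,0),(0,4),(4,0),(0,5),(5,0),(0,6),(6,0),
   (1,2),(2,3),(3,1),(4,5),(5,6),(6,4)}

/-- Edges of the counterexample graph `G'`: vertex `0` (= `u'`) is
bidirectionally connected to `1, ..., 6`, plus one directed 6-cycle
`1→2→3→4→5→6→1`. -/
def egoEdgesG' : Finset (Fin 7 × Fin 7) :=
  {(0,1),(1,0),(0,2),(2,0),(0,3),(3,0),(0,4),(4,0),(0,5),(5,0),(0,6),(6,0),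
   (1,2),(2,3),(3,4),(4,5),(5,6),(6,1)}

/-- `v` lies on a directed `k`-cycle: `k` distinct vertices traversed cyclically
along directed edges, starting at `v`. -/
def HasDirCycleThrough (edges : Finset (Fin 7 × Fin 7)) (k : ℕ) (v : Fin 7) : Prop :=
  ∃ c : ℕ → Fin 7, c 0 = v ∧ c k = v ∧ (∀ i < k, (c i, c (i + 1)) ∈ edges) ∧
    ∀ i < k, ∀ j < k, i ≠ j → c i ≠ c j

lemma hub_G : ∀ z : Fin 7, z ≠ 0 → ((0 : Fin 7), z) ∈ egoEdgesG := by decide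

lemma hub_G' : ∀ x : Fin 7, (∀ y, y ≠ x → (x, y) ∈ egoEdgesG') → x = 0 := by decide

lemma no_tri_G' : ¬ ∃ p q r : Fin 7, p ≠ 0 ∧ q ≠ 0 ∧ r ≠ 0 ∧
    (p, q) ∈ egoEdgesG' ∧ (q, r) ∈ egoEdgesG' ∧ (r, p) ∈ egoEdgesG' := by decide

lemma no_iso : ¬ ∃ φ : Fin 7 ≃ Fin 7, ∀ x y, (x, y) ∈ egoEdgesG ↔ (φ x, φ y) ∈ egoEdgesG' := by
  rintro ⟨φ, h⟩
  have h0 : φ 0 = 0 := by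
    apply hub_G'
    intro y hy
    have hz : φ (φ.symm y) = y := φ.apply_symm_apply y
    have hz0 : φ.symm y ≠ 0 := fun hc => hy (by rw [← hz, hc])
    have := (h 0 (φ.symm y)).mp (hub_G _ hz0)
    rwa [hz] at this
  have hne : ∀ i : Fin 7, i ≠ 0 → φ i ≠ 0 := by
    intro i hi hc
    exact hi (φ.injective (hc.trans h0.symm))
  exact no_tri_G' ⟨φ 1, φ 2, φ 3, hne 1 (by decide), hne 2 (by decide), hne 3 (by decide),
    (h 1 2).mp (by decide), (h 2 3).mp (by decide), (h 3 1).mp (by decide)⟩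

lemma no_path5 : ¬ ∃ x1 x2 x3 x4 : Fin 7,
    ((0:Fin 7), x1) ∈ egoEdgesG ∧ (x1, x2) ∈ egoEdgesG ∧ (x2, x3) ∈ egoEdgesG ∧
    (x3, x4) ∈ egoEdgesG ∧ (x4, (0:Fin 7)) ∈ egoEdgesG ∧
    x1 ≠ 0 ∧ x2 ≠ 0 ∧ x3 ≠ 0 ∧ x4 ≠ 0 ∧ x1 ≠ x2 ∧ x1 ≠ x3 ∧ x1 ≠ x4 ∧
    x2 ≠ x3 ∧ x2 ≠ x4 ∧ x3 ≠ x4 := by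
  decide

/-- `G` and `G'` are not isomorphic as directed graphs; in particular `u'` lies
on a directed 5-cycle while `u` does not. -/
theorem ego_id_counterexample_not_isomorphic :
    (¬ ∃ φ : Fin 7 ≃ Fin 7, ∀ x y, (x, y) ∈ egoEdgesG ↔ (φ x, φ y) ∈ egoEdgesG') ∧
      HasDirCycleThrough egoEdgesG' 5 0 ∧ ¬ HasDirCycleThrough egoEdgesG 5 0 := by
  refine ⟨no_iso, ?_, ?_⟩
  · refine ⟨fun i => if i = 0 then 0 else if i = 1 then 1 else if i = 2 then 2
      else if i = 3 then 3 else if i = 4 then 4 else 0, rfl, rfl, ?_, ?_⟩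
    · decide
    · decide
  · rintro ⟨c, h0, h5, he, hd⟩
    apply no_path5
    refine ⟨c 1, c 2, c 3, c 4, ?_, ?_, ?_, ?_, ?_, ?_, ?_, ?_, ?_, ?_, ?_, ?_, ?_, ?_, ?_⟩
    · have := he 0 (by norm_num); rwa [h0] at this
    · exact he 1 (by norm_num)
    · exact he 2 (by norm_num)
    · exact he 3 (by norm_num)
    · have := he 4 (by norm_num); rwa [h5] at this
    · have := hd 1 (by norm_num) 0 (by norm_num) (by norm_num); rwa [h0] at this
    · have := hd 2 (by norm_num) 0 (by norm_num) (by norm_num); rwa [h0] at this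
    · have := hd 3 (by norm_num) 0 (by norm_num) (by norm_num); rwa [h0] at this
    · have := hd 4 (by norm_num) 0 (by norm_num) (by norm_num); rwa [h0] at this
    · exact hd 1 (by norm_num) 2 (by norm_num) (by norm_num)
    · exact hd 1 (by norm_num) 3 (by norm_num) (by norm_num)
    · exact hd 1 (by norm_num) 4 (by norm_num) (by norm_num)
    · exact hd 2 (by norm_num) 3 (by norm_num) (by norm_num)
    · exact hd 2 (by norm_num) 4 (by norm_num) (by norm_num)
    · exact hd 3 (by norm_num) 4 (by norm_num) (by norm_num)
end

section
/- The one-round color refinement (1-WL) with ego-ID initialization cannot distinguish u from u' in the counterexample pair: if every vertex of G other than u receives color 0 and u receives color 1 (and analogously for G'), then after any number of rounds of color refinement on the underlying directed graphs, the multiset of colors in G equals the multiset of colors in G', and the color of u equals the color of u' at every round. -/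
/-- `t` rounds of color refinement (1-WL) on the directed graph over `Fin 7`
with edge set `edges`: each vertex's new color is an (injective) hash of its
current color, the multiset of colors of its in-neighbors, and the multiset of
colors of its out-neighbors. -/
def wlIter {α : Type*} (hash : α × Multiset α × Multiset α → α)
    (edges : Finset (Fin 7 × Fin 7)) (c₀ : Fin 7 → α) : ℕ → Fin 7 → α
  | 0 => c₀
  | t + 1 => fun v =>
      hash (wlIter hash edges c₀ t v,
        (Finset.univ.filter (fun u => (u, v) ∈ edges)).val.map
          (wlIter hash edges c₀ t),
        (Finset.univ.filter (fun u => (v, u) ∈ edges)).val.map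
          (wlIter hash edges c₀ t))


theorem wl_key {α : Type*} (hash : α × Multiset α × Multiset α → α)
    (x y : α) (c₀ : Fin 7 → α) (hc₀ : c₀ = fun v => if v = 0 then x else y) :
    ∀ t : ℕ, ∃ a b : α,
      (∀ v : Fin 7, wlIter hash egoEdgesG c₀ t v = if v = 0 then a else b) ∧
      (∀ v : Fin 7, wlIter hash egoEdgesG' c₀ t v = if v = 0 then a else b) := by
  intro t
  induction t with
  | zero => exact ⟨x, y, fun v => by rw [hc₀]; rfl, fun v => by rw [hc₀]; rfl⟩
  | succ t ih =>
    obtain ⟨a, b, hG, hG'⟩ := ih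
    have wG : wlIter hash egoEdgesG c₀ t = fun v => if v = 0 then a else b := funext hG
    have wG' : wlIter hash egoEdgesG' c₀ t = fun v => if v = 0 then a else b := funext hG'
    have hP0 : wlIter hash egoEdgesG c₀ (t+1) 0 = hash (a, {b,b,b,b,b,b}, {b,b,b,b,b,b}) := by
      show hash (_, _, _) = _
      rw [wG, show (Finset.univ.filter (fun u => (u,(0:Fin 7)) ∈ egoEdgesG)) = {1,2,3,4,5,6} from by decide,
        show (Finset.univ.filter (fun u => ((0:Fin 7),u) ∈ egoEdgesG)) = {1,2,3,4,5,6} from by decide]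
      rfl
    have hP1 : wlIter hash egoEdgesG c₀ (t+1) 1 = hash (b, {a,b}, {a,b}) := by
      show hash (_, _, _) = _
      rw [wG, show (Finset.univ.filter (fun u => (u,(1:Fin 7)) ∈ egoEdgesG)) = {0,3} from by decide,
        show (Finset.univ.filter (fun u => ((1:Fin 7),u) ∈ egoEdgesG)) = {0,2} from by decide]
      rfl
    have hP2 : wlIter hash egoEdgesG c₀ (t+1) 2 = hash (b, {a,b}, {a,b}) := by
      show hash (_, _, _) = _
      rw [wG, show (Finset.univ.filter (fun u => (u,(2:Fin 7)) ∈ egoEdgesG)) = {0,1} from by decide,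
        show (Finset.univ.filter (fun u => ((2:Fin 7),u) ∈ egoEdgesG)) = {0,3} from by decide]
      rfl
    have hP3 : wlIter hash egoEdgesG c₀ (t+1) 3 = hash (b, {a,b}, {a,b}) := by
      show hash (_, _, _) = _
      rw [wG, show (Finset.univ.filter (fun u => (u,(3:Fin 7)) ∈ egoEdgesG)) = {0,2} from by decide,
        show (Finset.univ.filter (fun u => ((3:Fin 7),u) ∈ egoEdgesG)) = {0,1} from by decide]
      rfl
    have hP4 : wlIter hash egoEdgesG c₀ (t+1) 4 = hash (b, {a,b}, {a,b}) := by
      show hash (_, _, _) = _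
      rw [wG, show (Finset.univ.filter (fun u => (u,(4:Fin 7)) ∈ egoEdgesG)) = {0,6} from by decide,
        show (Finset.univ.filter (fun u => ((4:Fin 7),u) ∈ egoEdgesG)) = {0,5} from by decide]
      rfl
    have hP5 : wlIter hash egoEdgesG c₀ (t+1) 5 = hash (b, {a,b}, {a,b}) := by
      show hash (_, _, _) = _
      rw [wG, show (Finset.univ.filter (fun u => (u,(5:Fin 7)) ∈ egoEdgesG)) = {0,4} from by decide,
        show (Finset.univ.filter (fun u => ((5:Fin 7),u) ∈ egoEdgesG)) = {0,6} from by decide]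
      rfl
    have hP6 : wlIter hash egoEdgesG c₀ (t+1) 6 = hash (b, {a,b}, {a,b}) := by
      show hash (_, _, _) = _
      rw [wG, show (Finset.univ.filter (fun u => (u,(6:Fin 7)) ∈ egoEdgesG)) = {0,5} from by decide,
        show (Finset.univ.filter (fun u => ((6:Fin 7),u) ∈ egoEdgesG)) = {0,4} from by decide]
      rfl
    have hQ0 : wlIter hash egoEdgesG' c₀ (t+1) 0 = hash (a, {b,b,b,b,b,b}, {b,b,b,b,b,b}) := by
      show hash (_, _, _) = _
      rw [wG', show (Finset.univ.filter (fun u => (u,(0:Fin 7)) ∈ egoEdgesG')) = {1,2,3,4,5,6} from by decide,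
        show (Finset.univ.filter (fun u => ((0:Fin 7),u) ∈ egoEdgesG')) = {1,2,3,4,5,6} from by decide]
      rfl
    have hQ1 : wlIter hash egoEdgesG' c₀ (t+1) 1 = hash (b, {a,b}, {a,b}) := by
      show hash (_, _, _) = _
      rw [wG', show (Finset.univ.filter (fun u => (u,(1:Fin 7)) ∈ egoEdgesG')) = {0,6} from by decide,
        show (Finset.univ.filter (fun u => ((1:Fin 7),u) ∈ egoEdgesG')) = {0,2} from by decide]
      rfl
    have hQ2 : wlIter hash egoEdgesG' c₀ (t+1) 2 = hash (b, {a,b}, {a,b}) := by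
      show hash (_, _, _) = _
      rw [wG', show (Finset.univ.filter (fun u => (u,(2:Fin 7)) ∈ egoEdgesG')) = {0,1} from by decide,
        show (Finset.univ.filter (fun u => ((2:Fin 7),u) ∈ egoEdgesG')) = {0,3} from by decide]
      rfl
    have hQ3 : wlIter hash egoEdgesG' c₀ (t+1) 3 = hash (b, {a,b}, {a,b}) := by
      show hash (_, _, _) = _
      rw [wG', show (Finset.univ.filter (fun u => (u,(3:Fin 7)) ∈ egoEdgesG')) = {0,2} from by decide,
        show (Finset.univ.filter (fun u => ((3:Fin 7),u) ∈ egoEdgesG')) = {0,4} from by decide]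
      rfl
    have hQ4 : wlIter hash egoEdgesG' c₀ (t+1) 4 = hash (b, {a,b}, {a,b}) := by
      show hash (_, _, _) = _
      rw [wG', show (Finset.univ.filter (fun u => (u,(4:Fin 7)) ∈ egoEdgesG')) = {0,3} from by decide,
        show (Finset.univ.filter (fun u => ((4:Fin 7),u) ∈ egoEdgesG')) = {0,5} from by decide]
      rfl
    have hQ5 : wlIter hash egoEdgesG' c₀ (t+1) 5 = hash (b, {a,b}, {a,b}) := by
      show hash (_, _, _) = _
      rw [wG', show (Finset.univ.filter (fun u => (u,(5:Fin 7)) ∈ egoEdgesG')) = {0,4} from by decide,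
        show (Finset.univ.filter (fun u => ((5:Fin 7),u) ∈ egoEdgesG')) = {0,6} from by decide]
      rfl
    have hQ6 : wlIter hash egoEdgesG' c₀ (t+1) 6 = hash (b, {a,b}, {a,b}) := by
      show hash (_, _, _) = _
      rw [wG', show (Finset.univ.filter (fun u => (u,(6:Fin 7)) ∈ egoEdgesG')) = {0,5} from by decide,
        show (Finset.univ.filter (fun u => ((6:Fin 7),u) ∈ egoEdgesG')) = {0,1} from by decide]
      rfl
    refine ⟨hash (a, {b,b,b,b,b,b}, {b,b,b,b,b,b}), hash (b, {a,b}, {a,b}), ?_, ?_⟩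
    · intro v
      fin_cases v
      exacts [hP0, hP1, hP2, hP3, hP4, hP5, hP6]
    · intro v
      fin_cases v
      exacts [hQ0, hQ1, hQ2, hQ3, hQ4, hQ5, hQ6]

/-- Color refinement with ego-ID initialization (center `0` colored `x`, all
other vertices colored `y ≠ x`) cannot distinguish `u` from `u'`: at every
round, the multiset of colors in `G` equals the multiset of colors in `G'`,
the color of `u` equals the color of `u'`, and the index-preserving bijection
(`u↦u'`, `a↦a'`, `b↦b'`, `c↦c'`, `d↦d'`, `e↦e'`, `f↦f'`) preserves colors. -/
theorem wl_ego_id_cannot_distinguish {α : Type*}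
    (hash : α × Multiset α × Multiset α → α) (hinj : Function.Injective hash)
    (x y : α) (hxy : x ≠ y)
    (c₀ : Fin 7 → α) (hc₀ : c₀ = fun v => if v = 0 then x else y) :
    ∀ t : ℕ,
      (Finset.univ.val.map (wlIter hash egoEdgesG c₀ t) =
        Finset.univ.val.map (wlIter hash egoEdgesG' c₀ t)) ∧
      wlIter hash egoEdgesG c₀ t 0 = wlIter hash egoEdgesG' c₀ t 0 ∧
      (∀ v : Fin 7, wlIter hash egoEdgesG c₀ t v = wlIter hash egoEdgesG' c₀ t v) := by
  intro t
  obtain ⟨a, b, hG, hG'⟩ := wl_key hash x y c₀ hc₀ t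
  have h3 : ∀ v : Fin 7, wlIter hash egoEdgesG c₀ t v = wlIter hash egoEdgesG' c₀ t v :=
    fun v => by rw [hG v, hG' v]
  exact ⟨by rw [funext hG, funext hG'], h3 0, h3⟩
end
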